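/- For any two Dynkin quivers Q and Q' on the same Dynkin diagram Δ and any i,j ∈ I, the functions η_{i,j}^Q and η_{i,j}^{Q'} coincide: η_{i,j}^Q(u) = η_{i,j}^{Q'}(u) for all u ∈ ℤ. -/

import Mathlib

noncomputable section

open scoped BigOperators

/-- A finite Cartan datum: a connected Dynkin diagram of finite type with vertex set `I`,
Cartan matrix `c`, symmetrizers `d`, simple roots `α`, fundamental weights `ϖ`, an invariant
symmetric bilinear form `form` (normalized so that `(α,α) = 2` for short roots, i.e. some
`d i = 1`), simple reflections `s` acting on the weight lattice `V`, the set of positive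
roots `Φ`, the longest element `w0` (with induced involution `star`), and Coxeter number
`hcox`. -/
structure SSDatum where
  I : Type
  [fintypeI : Fintype I]
  [decEqI : DecidableEq I]
  [nonemptyI : Nonempty I]
  V : Type
  [acgV : AddCommGroup V]
  [modV : Module ℚ V]
  [decEqV : DecidableEq V]
  c : I → I → ℤ
  d : I → ℤ
  α : I → V
  ϖ : I → V
  form : V → V → ℚ
  s : I → (V ≃ₗ[ℚ] V)
  Φ : Finset V
  w0 : V ≃ₗ[ℚ] V
  star : I → I
  hcox : ℤ
  c_diag : ∀ i, c i i = 2
  c_nonpos : ∀ i j, i ≠ j → c i j ≤ 0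
  c_zero_sym : ∀ i j, c i j = 0 → c j i = 0
  connected : ∀ i j, Relation.ReflTransGen (fun a b => a ≠ b ∧ c a b ≠ 0) i j
  d_pos : ∀ i, 0 < d i
  d_one : ∃ i, d i = 1
  d_symmetrize : ∀ i j, d i * c i j = d j * c j i
  exists_basis : ∃ b : Module.Basis I ℚ V, ∀ i, b i = ϖ i
  form_symm : ∀ x y, form x y = form y x
  form_add : ∀ x y z, form (x + y) z = form x z + form y z
  form_smul : ∀ (a : ℚ) (x y), form (a • x) y = a * form x y
  form_alpha : ∀ i j, form (α i) (α j) = (d i : ℚ) * (c i j : ℚ)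
  form_alpha_omega : ∀ i j, form (α i) (ϖ j) = if i = j then (d i : ℚ) else 0
  form_inv : ∀ i x y, form (s i x) (s i y) = form x y
  s_omega : ∀ i j, s i (ϖ j) = ϖ j - (if i = j then (1 : ℚ) else 0) • α i
  s_alpha : ∀ i j, s i (α j) = α j - ((c i j : ℚ)) • α i
  alpha_mem : ∀ i, α i ∈ Φ
  zero_not_mem : (0 : V) ∉ Φ
  pos_comb : ∀ β ∈ Φ, ∃ f : I → ℕ, β = ∑ i, (f i : ℚ) • α i
  s_perm : ∀ i, ∀ β ∈ Φ, β ≠ α i → s i β ∈ Φ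
  w0_mem : w0 ∈ Subgroup.closure (Set.range s)
  w0_alpha : ∀ i, w0 (α i) = - α (star i)
  star_invol : ∀ i, star (star i) = i
  w0_neg : ∀ β ∈ Φ, -(w0 β) ∈ Φ
  hcox_pos : 0 < hcox
  hcox_card : hcox * (Fintype.card I : ℤ) = 2 * (Φ.card : ℤ)

attribute [instance] SSDatum.fintypeI SSDatum.decEqI SSDatum.nonemptyI
attribute [instance] SSDatum.acgV SSDatum.modV SSDatum.decEqV

namespace SSDatum

variable (D : SSDatum)

/-- The underlying graph of the Dynkin diagram. -/
def graph : SimpleGraph D.I where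
  Adj a b := a ≠ b ∧ D.c a b ≠ 0
  symm := by
    constructor
    intro a b h
    exact ⟨h.1.symm, fun hz => h.2 (D.c_zero_sym b a hz)⟩
  loopless := by
    constructor
    intro a h
    exact h.1 rfl

/-- The graph distance `d(i,j)` in the Dynkin diagram. -/
def dist (i j : D.I) : ℕ := D.graph.dist i j

/-- The product `s_{i_1} ⋯ s_{i_r}` of simple reflections along a word. -/
def wordProd (l : List D.I) : D.V ≃ₗ[ℚ] D.V := (l.map D.s).prod

/-- The length of an element of the Weyl group. -/
def len (w : D.V ≃ₗ[ℚ] D.V) : ℕ :=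
  sInf {n | ∃ l : List D.I, l.length = n ∧ D.wordProd l = w}

/-- A word is a reduced expression of its product. -/
def IsReducedWord (l : List D.I) : Prop := l.length = D.len (D.wordProd l)

/-- The map `ŵ` on `Φ⁺ × ℤ`:
`ŵ(β,k) = (wβ, k)` if `wβ ∈ Φ⁺` and `ŵ(β,k) = (−wβ, k−1)` otherwise. -/
def hat (w : D.V ≃ₗ[ℚ] D.V) (x : D.V × ℤ) : D.V × ℤ :=
  if w x.1 ∈ D.Φ then (w x.1, x.2) else (-(w x.1), x.2 - 1)

/-- The map `(ŵ)⁻¹` on `Φ⁺ × ℤ`. -/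
def hatInv (w : D.V ≃ₗ[ℚ] D.V) (x : D.V × ℤ) : D.V × ℤ :=
  if w⁻¹ x.1 ∈ D.Φ then (w⁻¹ x.1, x.2) else (-(w⁻¹ x.1), x.2 + 1)

/-- `ξ` is a height function on the Dynkin diagram. -/
def IsHeight (ξ : D.I → ℤ) : Prop :=
  ∀ i j, D.dist i j = 1 → ξ i - ξ j = 1 ∨ ξ j - ξ i = 1

/-- `i` is a source of the Dynkin quiver `(Δ, ξ)`. -/
def IsSource (ξ : D.I → ℤ) (i : D.I) : Prop :=
  ∀ j, D.dist i j = 1 → ξ j < ξ i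

/-- The height function of the reflected quiver `s_i Q`. -/
def rHeight (ξ : D.I → ℤ) (i : D.I) : D.I → ℤ :=
  fun j => if j = i then ξ i - 2 else ξ j

/-- A sequence in `I` is adapted to the Dynkin quiver `(Δ, ξ)`. -/
def Adapted (ξ : D.I → ℤ) : List D.I → Prop
  | [] => True
  | i :: l => D.IsSource ξ i ∧ Adapted (D.rHeight ξ i) l

/-- `τ` is the Coxeter element `τ_Q` attached to the Dynkin quiver with height function `ξ`:
it has a `Q`-adapted reduced expression in which each simple reflection occurs exactly once. -/
def IsCoxeterFor (ξ : D.I → ℤ) (τ : D.V ≃ₗ[ℚ] D.V) : Prop :=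
  ∃ l : List D.I, l.Nodup ∧ (∀ i, i ∈ l) ∧ D.Adapted ξ l ∧ D.wordProd l = τ

/-- `γ_i^Q = (1 - τ_Q) ϖ_i`. -/
def gam (τ : D.V ≃ₗ[ℚ] D.V) (i : D.I) : D.V := D.ϖ i - τ (D.ϖ i)

/-- The map `φ_Q : Δ̂₀ → Φ⁺ × ℤ`, defined inductively from
`φ_Q(i, ξ_i) = (γ_i^Q, 0)` by applying `(τ̂_Q)^{∓1}` when moving `p ↦ p ± 2`. -/
def phi (ξ : D.I → ℤ) (τ : D.V ≃ₗ[ℚ] D.V) (i : D.I) (p : ℤ) : D.V × ℤ :=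
  if p ≤ ξ i then (D.hat τ)^[((ξ i - p) / 2).toNat] (D.gam τ i, 0)
  else (D.hatInv τ)^[((p - ξ i) / 2).toNat] (D.gam τ i, 0)

/-- The function `η_{i,j}^Q : ℤ → ℚ`. -/
def eta (ξ : D.I → ℤ) (τ : D.V ≃ₗ[ℚ] D.V) (i j : D.I) (u : ℤ) : ℚ :=
  if (u + ξ j - ξ i - 1) % 2 = 0 then
    D.form (D.ϖ i) ((τ ^ ((u + ξ j - ξ i - 1) / 2)) (D.gam τ j))
  else 0

end SSDatum

/-- The variable `t` of the field of formal Laurent series `ℚ((t))`. -/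
def tq : LaurentSeries ℚ := HahnSeries.single 1 1

namespace SSDatum

variable (D : SSDatum)

/-- The symmetrized `t`-quantized Cartan matrix `B(t) = C(t) · D⁻¹`, where
`C(t)_{i,i} = t + t⁻¹` and `C(t)_{i,j} = c_{i,j}` for `i ≠ j`. -/
def Bt : Matrix D.I D.I (LaurentSeries ℚ) :=
  Matrix.of fun i j =>
    (if i = j then tq + tq⁻¹ else (D.c i j : LaurentSeries ℚ)) * ((D.d j : LaurentSeries ℚ))⁻¹

/-- `b̃_{i,j}(u)`: the coefficient of `t^u` in the Laurent expansion of `(B(t)⁻¹)_{i,j}`. -/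
def btilde (i j : D.I) (u : ℤ) : ℚ := ((D.Bt)⁻¹ i j).coeff u

/-- `Ñ(i,p;j,s) = b̃_{i,j}(p−s−1) − b̃_{i,j}(s−p−1) − b̃_{i,j}(p−s+1) + b̃_{i,j}(s−p+1)`. -/
def Ncal (i : D.I) (p : ℤ) (j : D.I) (q : ℤ) : ℚ :=
  D.btilde i j (p - q - 1) - D.btilde i j (q - p - 1)
    - D.btilde i j (p - q + 1) + D.btilde i j (q - p + 1)

end SSDatum

/-!
Reflecting a Dynkin quiver at a source `k` replaces `τ_Q` by `s_k τ_Q s_k` and lowers `ξ_k` by 2.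
Since `τ_Q ϖ_k = ϖ_k - α_k = s_k ϖ_k`, we have `s_k ϖ_j = τ_Q^{δ(j=k)} ϖ_j` for every `j`; as `s_k`
and `τ_Q` preserve the form, the resulting change of the exponent of `τ_Q` in `η_{i,j}` is exactly
compensated by the change of `ξ_j - ξ_i`, so `η` is unchanged. A constant shift of the height
function changes neither `τ_Q` nor `η`. On a connected diagram two height functions differ by a
constant modulo 2, so after a shift `ξ' ≤ ξ` with `ξ - ξ'` even; reflecting `ξ` at a source where
it exceeds `ξ'` lowers `∑ (ξ - ξ')` by 2, and when `ξ = ξ'` the Coxeter elements agree.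
-/

namespace SSDatum

variable {D : SSDatum}

lemma ext_omega {f g : D.V ≃ₗ[ℚ] D.V} (h : ∀ r, f (D.ϖ r) = g (D.ϖ r)) : f = g := by
  obtain ⟨b, hb⟩ := D.exists_basis
  exact b.ext' fun r => by rw [hb]; exact h r

lemma s_omega_of_ne {i j : D.I} (h : i ≠ j) : D.s i (D.ϖ j) = D.ϖ j := by
  simp [D.s_omega, h]

lemma s_omega_self (i : D.I) : D.s i (D.ϖ i) = D.ϖ i - D.α i := by
  simp [D.s_omega]

lemma s_alpha_of_c_eq_zero {i j : D.I} (h : D.c i j = 0) : D.s i (D.α j) = D.α j := by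
  simp [D.s_alpha, h]

lemma s_mul_self (k : D.I) : D.s k * D.s k = 1 := by
  refine ext_omega fun r => ?_
  rw [LinearEquiv.mul_apply]
  by_cases h : k = r
  · subst h
    rw [s_omega_self, map_sub, s_omega_self, D.s_alpha, D.c_diag]
    show _ = D.ϖ k
    module
  · rw [s_omega_of_ne h, s_omega_of_ne h]
    rfl

lemma s_apply_s (k : D.I) (x : D.V) : D.s k (D.s k x) = x := by
  rw [← LinearEquiv.mul_apply, s_mul_self]
  rfl

lemma s_inv (k : D.I) : (D.s k)⁻¹ = D.s k :=
  inv_eq_of_mul_eq_one_right (s_mul_self k)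

lemma commute_s_of_c_eq_zero {m k : D.I} (hne : m ≠ k) (hc : D.c m k = 0) :
    Commute (D.s m) (D.s k) := by
  refine ext_omega fun r => ?_
  rw [LinearEquiv.mul_apply, LinearEquiv.mul_apply]
  by_cases hm : m = r
  · subst hm
    rw [s_omega_of_ne (Ne.symm hne), s_omega_self, map_sub, s_omega_of_ne (Ne.symm hne),
      s_alpha_of_c_eq_zero (D.c_zero_sym m k hc)]
  by_cases hk : k = r
  · subst hk
    rw [s_omega_self, map_sub, s_omega_of_ne hne, s_alpha_of_c_eq_zero hc, s_omega_self]
  · rw [s_omega_of_ne hk, s_omega_of_ne hm, s_omega_of_ne hk]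

variable (D) in
def isometryGroup : Subgroup (D.V ≃ₗ[ℚ] D.V) where
  carrier := {w | ∀ x y, D.form (w x) (w y) = D.form x y}
  one_mem' _ _ := rfl
  mul_mem' hv hw x y := (hv _ _).trans (hw x y)
  inv_mem' {w} hw x y := by
    rw [← hw]
    simp

lemma form_apply_left {w : D.V ≃ₗ[ℚ] D.V} (hw : w ∈ D.isometryGroup) (x y : D.V) :
    D.form (w x) y = D.form x (w⁻¹ y) := by
  conv_rhs => rw [← hw x (w⁻¹ y)]
  simp

lemma s_mem_isometryGroup (k : D.I) : D.s k ∈ D.isometryGroup :=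
  D.form_inv k

lemma form_s_right (k : D.I) (x y : D.V) : D.form x (D.s k y) = D.form (D.s k x) y := by
  rw [form_apply_left (s_mem_isometryGroup k), s_inv]

lemma wordProd_mem_isometryGroup (l : List D.I) : D.wordProd l ∈ D.isometryGroup :=
  Subgroup.list_prod_mem _ fun w hw => by
    obtain ⟨k, -, rfl⟩ := List.mem_map.1 hw
    exact s_mem_isometryGroup k

lemma dist_eq_one_iff {a b : D.I} : D.dist a b = 1 ↔ a ≠ b ∧ D.c a b ≠ 0 :=
  SimpleGraph.dist_eq_one_iff_adj

lemma dist_comm (a b : D.I) : D.dist a b = D.dist b a :=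
  SimpleGraph.dist_comm

lemma IsSource.c_eq_zero {ξ : D.I → ℤ} {m k : D.I} (hm : D.IsSource ξ m) (hk : D.IsSource ξ k)
    (hne : m ≠ k) : D.c m k = 0 := by
  by_contra hc
  have hmk : D.dist m k = 1 := dist_eq_one_iff.2 ⟨hne, hc⟩
  have := hm k hmk
  have := hk m (by rwa [dist_comm])
  omega

lemma IsSource.rHeight_of_ne {ξ : D.I → ℤ} {m k : D.I} (hk : D.IsSource ξ k) (hne : k ≠ m) :
    D.IsSource (D.rHeight ξ m) k := by
  intro j hj
  have := hk j hj
  simp only [rHeight, hne, if_false]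
  split_ifs with hjm
  · subst hjm
    omega
  · exact this

lemma IsSource.rHeight_of_c_eq_zero {ξ : D.I → ℤ} {m k : D.I} (hm : D.IsSource ξ m)
    (hne : m ≠ k) (hc : D.c m k = 0) : D.IsSource (D.rHeight ξ k) m := by
  intro j hj
  have hjk : j ≠ k := by
    rintro rfl
    exact (dist_eq_one_iff.1 hj).2 hc
  simpa only [rHeight, hjk, hne, if_false] using hm j hj

lemma rHeight_comm {m k : D.I} (hne : m ≠ k) (ξ : D.I → ℤ) :
    D.rHeight (D.rHeight ξ m) k = D.rHeight (D.rHeight ξ k) m := by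
  funext j
  simp only [rHeight]
  split_ifs <;> simp_all

lemma IsHeight.rHeight {ξ : D.I → ℤ} {k : D.I} (h : D.IsHeight ξ) (hk : D.IsSource ξ k) :
    D.IsHeight (D.rHeight ξ k) := by
  intro a b hab
  have hne := (dist_eq_one_iff.1 hab).1
  have hab' := h a b hab
  simp only [SSDatum.rHeight]
  split_ifs with ha hb hb
  · exact absurd (ha.trans hb.symm) hne
  · subst ha
    have := hk b hab
    omega
  · subst hb
    have := hk a (by rwa [dist_comm])
    omega
  · exact hab'

lemma IsHeight.emod_two_sub_eq {ξ ξ' : D.I → ℤ} (h : D.IsHeight ξ) (h' : D.IsHeight ξ')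
    (a b : D.I) : (ξ a - ξ' a) % 2 = (ξ b - ξ' b) % 2 := by
  induction D.connected a b with
  | refl => rfl
  | @tail x y _ hxy ih =>
    have hd : D.dist x y = 1 := dist_eq_one_iff.2 hxy
    have := h x y hd
    have := h' x y hd
    omega

lemma Adapted.wordProd_eq_s_mul_erase {ξ : D.I → ℤ} {k : D.I} {l : List D.I}
    (hl : D.Adapted ξ l) (hk : D.IsSource ξ k) (hkl : k ∈ l) :
    D.wordProd l = D.s k * D.wordProd (l.erase k) := by
  induction l generalizing ξ with
  | nil => exact absurd hkl List.not_mem_nil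
  | cons m t ih =>
    obtain ⟨hm, ht⟩ := hl
    by_cases hmk : m = k
    · subst hmk
      simp [wordProd]
    · have hkt : k ∈ t := (List.mem_cons.1 hkl).resolve_left (Ne.symm hmk)
      rw [List.erase_cons_tail (by simpa using hmk), wordProd, wordProd, List.map_cons,
        List.map_cons, List.prod_cons, List.prod_cons, ← wordProd, ← wordProd,
        ih ht (hk.rHeight_of_ne (Ne.symm hmk)) hkt, ← mul_assoc, ← mul_assoc,
        (commute_s_of_c_eq_zero hmk (hm.c_eq_zero hk hmk)).eq]

lemma Adapted.erase_of_isSource {ξ : D.I → ℤ} {k : D.I} {l : List D.I}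
    (hl : D.Adapted ξ l) (hk : D.IsSource ξ k) : D.Adapted (D.rHeight ξ k) (l.erase k) := by
  induction l generalizing ξ with
  | nil => trivial
  | cons m t ih =>
    obtain ⟨hm, ht⟩ := hl
    by_cases hmk : m = k
    · subst hmk
      simpa using ht
    · rw [List.erase_cons_tail (by simpa using hmk)]
      refine ⟨hm.rHeight_of_c_eq_zero hmk (hm.c_eq_zero hk hmk), ?_⟩
      rw [← rHeight_comm hmk]
      exact ih ht (hk.rHeight_of_ne (Ne.symm hmk))

lemma Adapted.wordProd_eq_of_perm {ξ : D.I → ℤ} {l l' : List D.I} (hl : D.Adapted ξ l)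
    (hl' : D.Adapted ξ l') (hp : l.Perm l') : D.wordProd l = D.wordProd l' := by
  induction l' generalizing ξ l with
  | nil => rw [List.perm_nil.1 hp]
  | cons k t ih =>
    obtain ⟨hk, ht⟩ := hl'
    have hkl : k ∈ l := hp.mem_iff.2 List.mem_cons_self
    have hpt : (l.erase k).Perm t := by simpa using hp.erase k
    rw [hl.wordProd_eq_s_mul_erase hk hkl, ih (hl.erase_of_isSource hk) ht hpt]
    simp [wordProd]

lemma adapted_append (ξ : D.I → ℤ) (l l' : List D.I) :
    D.Adapted ξ (l ++ l') ↔ D.Adapted ξ l ∧ D.Adapted (l.foldl D.rHeight ξ) l' := by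
  induction l generalizing ξ with
  | nil => simp [Adapted]
  | cons m t ih => simp only [List.cons_append, Adapted, ih, List.foldl_cons, and_assoc]

lemma foldl_rHeight_apply {l : List D.I} (hl : l.Nodup) (ξ : D.I → ℤ) (j : D.I) :
    l.foldl D.rHeight ξ j = if j ∈ l then ξ j - 2 else ξ j := by
  induction l generalizing ξ with
  | nil => simp
  | cons m t ih =>
    rw [List.foldl_cons, ih (List.nodup_cons.1 hl).2]
    by_cases hjm : j = m
    · subst hjm
      simp [(List.nodup_cons.1 hl).1, rHeight]
    · simp [rHeight, hjm]

lemma wordProd_apply_omega_of_not_mem {k : D.I} {l : List D.I} (hk : k ∉ l) :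
    D.wordProd l (D.ϖ k) = D.ϖ k := by
  induction l with
  | nil => rfl
  | cons m t ih =>
    rw [List.mem_cons, not_or] at hk
    simp only [wordProd, List.map_cons, List.prod_cons] at ih ⊢
    rw [LinearEquiv.mul_apply, ih hk.2, s_omega_of_ne (Ne.symm hk.1)]

lemma IsCoxeterFor.unique {ξ : D.I → ℤ} {τ τ' : D.V ≃ₗ[ℚ] D.V}
    (h : D.IsCoxeterFor ξ τ) (h' : D.IsCoxeterFor ξ τ') : τ = τ' := by
  obtain ⟨l, hnd, hfull, had, rfl⟩ := h
  obtain ⟨l', hnd', hfull', had', rfl⟩ := h'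
  refine had.wordProd_eq_of_perm had' (List.perm_of_nodup_nodup_toFinset_eq hnd hnd' ?_)
  ext a
  simp [hfull, hfull']

lemma IsCoxeterFor.mem_isometryGroup {ξ : D.I → ℤ} {τ : D.V ≃ₗ[ℚ] D.V}
    (h : D.IsCoxeterFor ξ τ) : τ ∈ D.isometryGroup := by
  obtain ⟨l, -, -, -, rfl⟩ := h
  exact wordProd_mem_isometryGroup l

lemma IsCoxeterFor.apply_omega_of_isSource {ξ : D.I → ℤ} {τ : D.V ≃ₗ[ℚ] D.V} {k : D.I}
    (h : D.IsCoxeterFor ξ τ) (hk : D.IsSource ξ k) : τ (D.ϖ k) = D.ϖ k - D.α k := by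
  obtain ⟨l, hnd, hfull, had, rfl⟩ := h
  rw [had.wordProd_eq_s_mul_erase hk (hfull k), LinearEquiv.mul_apply,
    wordProd_apply_omega_of_not_mem hnd.not_mem_erase, s_omega_self]

lemma IsCoxeterFor.rHeight {ξ : D.I → ℤ} {τ : D.V ≃ₗ[ℚ] D.V} {k : D.I}
    (h : D.IsCoxeterFor ξ τ) (hk : D.IsSource ξ k) :
    D.IsCoxeterFor (D.rHeight ξ k) (D.s k * τ * D.s k) := by
  obtain ⟨l, hnd, hfull, had, rfl⟩ := h
  have hperm : (l.erase k ++ [k]).Perm l :=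
    (List.perm_append_singleton k _).trans (List.perm_cons_erase (hfull k)).symm
  have hk' : k ∉ l.erase k := hnd.not_mem_erase
  refine ⟨l.erase k ++ [k], hperm.nodup_iff.2 hnd, fun i => hperm.mem_iff.2 (hfull i), ?_, ?_⟩
  · -- after `s_k` and the other vertices of `l`, every height has dropped by 2
    refine (adapted_append _ _ _).2 ⟨had.erase_of_isSource hk, fun j hj => ?_, trivial⟩
    have hjk : j ≠ k := (dist_eq_one_iff.1 hj).1.symm
    have hjl : j ∈ l.erase k := (List.mem_erase_of_ne hjk).2 (hfull j)
    have := hk j hj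
    simp only [foldl_rHeight_apply (hnd.erase k), hjl, hk', if_true, if_false, SSDatum.rHeight,
      hjk]
    omega
  · rw [had.wordProd_eq_s_mul_erase hk (hfull k), ← mul_assoc, s_mul_self, one_mul]
    simp [wordProd]

lemma isSource_shift {ξ : D.I → ℤ} {c : ℤ} {k : D.I} :
    D.IsSource (fun a => ξ a + c) k ↔ D.IsSource ξ k :=
  forall_congr' fun _ => imp_congr_right fun _ => add_lt_add_iff_right c

lemma rHeight_shift (ξ : D.I → ℤ) (c : ℤ) (k : D.I) :
    D.rHeight (fun a => ξ a + c) k = fun a => D.rHeight ξ k a + c := by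
  funext a
  simp only [rHeight]
  split_ifs <;> omega

lemma adapted_shift {c : ℤ} (l : List D.I) (ξ : D.I → ℤ) :
    D.Adapted (fun a => ξ a + c) l ↔ D.Adapted ξ l := by
  induction l generalizing ξ with
  | nil => rfl
  | cons m t ih => simp only [Adapted, rHeight_shift, isSource_shift, ih]

lemma IsHeight.shift {ξ : D.I → ℤ} (h : D.IsHeight ξ) (c : ℤ) :
    D.IsHeight (fun a => ξ a + c) := by
  intro a b hab
  simpa using h a b hab

lemma IsCoxeterFor.shift {ξ : D.I → ℤ} {τ : D.V ≃ₗ[ℚ] D.V} (h : D.IsCoxeterFor ξ τ) (c : ℤ) :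
    D.IsCoxeterFor (fun a => ξ a + c) τ := by
  obtain ⟨l, hnd, hfull, had, hl⟩ := h
  exact ⟨l, hnd, hfull, (adapted_shift l ξ).2 had, hl⟩

lemma eta_shift (ξ : D.I → ℤ) (c : ℤ) (τ : D.V ≃ₗ[ℚ] D.V) :
    D.eta (fun a => ξ a + c) τ = D.eta ξ τ := by
  funext i j u
  simp only [eta, show u + (ξ j + c) - (ξ i + c) - 1 = u + ξ j - ξ i - 1 by ring]

lemma conj_s_zpow (k : D.I) (τ : D.V ≃ₗ[ℚ] D.V) (n : ℤ) :
    (D.s k * τ * D.s k) ^ n = D.s k * τ ^ n * D.s k := by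
  simpa [s_inv] using (map_zpow (MulAut.conj (D.s k)) τ n).symm

lemma s_omega_eq_zpow {τ : D.V ≃ₗ[ℚ] D.V} {k : D.I} (hτk : τ (D.ϖ k) = D.ϖ k - D.α k)
    (j : D.I) : D.s k (D.ϖ j) = (τ ^ (if j = k then (1 : ℤ) else 0)) (D.ϖ j) := by
  split_ifs with hjk
  · subst hjk
    rw [s_omega_self, zpow_one, hτk]
  · rw [s_omega_of_ne (Ne.symm hjk), zpow_zero]
    rfl

lemma gam_conj_s {τ : D.V ≃ₗ[ℚ] D.V} {k : D.I} (hτk : τ (D.ϖ k) = D.ϖ k - D.α k) (j : D.I) :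
    D.gam (D.s k * τ * D.s k) j = D.s k ((τ ^ (if j = k then (1 : ℤ) else 0)) (D.gam τ j)) := by
  set e : ℤ := if j = k then 1 else 0
  have hcomm : (τ ^ e) (τ (D.ϖ j)) = τ ((τ ^ e) (D.ϖ j)) :=
    LinearEquiv.congr_fun (Commute.self_zpow τ e).eq.symm (D.ϖ j)
  rw [gam, gam, map_sub, map_sub, hcomm, ← s_omega_eq_zpow hτk, LinearEquiv.mul_apply,
    LinearEquiv.mul_apply, s_apply_s]

lemma form_omega_conj_s_zpow_gam {τ : D.V ≃ₗ[ℚ] D.V} {k : D.I} (hτ : τ ∈ D.isometryGroup)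
    (hτk : τ (D.ϖ k) = D.ϖ k - D.α k) (i j : D.I) (n : ℤ) :
    D.form (D.ϖ i) (((D.s k * τ * D.s k) ^ n) (D.gam (D.s k * τ * D.s k) j)) =
      D.form (D.ϖ i) ((τ ^ (n + (if j = k then 1 else 0) - (if i = k then 1 else 0)))
        (D.gam τ j)) := by
  set ei : ℤ := if i = k then 1 else 0
  set ej : ℤ := if j = k then 1 else 0
  calc D.form (D.ϖ i) (((D.s k * τ * D.s k) ^ n) (D.gam (D.s k * τ * D.s k) j))
      = D.form (D.s k (D.ϖ i)) ((τ ^ (n + ej)) (D.gam τ j)) := by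
        rw [conj_s_zpow, gam_conj_s hτk, zpow_add, ← form_s_right]
        simp only [LinearEquiv.mul_apply, s_apply_s]
        rfl
    _ = D.form (D.ϖ i) ((τ ^ ei)⁻¹ ((τ ^ (n + ej)) (D.gam τ j))) := by
        rw [s_omega_eq_zpow hτk, form_apply_left (zpow_mem hτ ei)]
    _ = D.form (D.ϖ i) ((τ ^ (n + ej - ei)) (D.gam τ j)) := by
        rw [← LinearEquiv.mul_apply, ← zpow_neg, ← zpow_add, neg_add_eq_sub]

lemma eta_rHeight {ξ : D.I → ℤ} {τ : D.V ≃ₗ[ℚ] D.V} {k : D.I} (hτ : D.IsCoxeterFor ξ τ)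
    (hk : D.IsSource ξ k) : D.eta (D.rHeight ξ k) (D.s k * τ * D.s k) = D.eta ξ τ := by
  funext i j u
  set ei : ℤ := if i = k then 1 else 0
  set ej : ℤ := if j = k then 1 else 0
  have hei : ei = 0 ∨ ei = 1 := by unfold ei; split_ifs <;> simp
  have hej : ej = 0 ∨ ej = 1 := by unfold ej; split_ifs <;> simp
  have hexp : u + D.rHeight ξ k j - D.rHeight ξ k i - 1 = u + ξ j - ξ i - 1 + 2 * ei - 2 * ej := by
    simp only [ei, ej, rHeight]
    split_ifs <;> subst_vars <;> omega
  simp only [eta, hexp]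
  by_cases hpar : (u + ξ j - ξ i - 1) % 2 = 0
  · rw [if_pos (by omega), if_pos hpar,
      form_omega_conj_s_zpow_gam hτ.mem_isometryGroup (hτ.apply_omega_of_isSource hk)]
    congr 3
    omega
  · rw [if_neg (by omega), if_neg hpar]

lemma sum_rHeight (ξ : D.I → ℤ) (k : D.I) : ∑ a, D.rHeight ξ k a = ∑ a, ξ a - 2 := by
  have h : ∀ a, D.rHeight ξ k a = ξ a - if a = k then 2 else 0 := fun a => by
    simp only [rHeight]
    split_ifs with hak
    · subst hak
      rfl
    · ring
  simp [h, Finset.sum_sub_distrib]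

lemma exists_isSource_of_le {ξ ξ' : D.I → ℤ} (hξ : D.IsHeight ξ) (hξ' : D.IsHeight ξ')
    (hle : ξ' ≤ ξ) (hpar : ∀ a, 2 ∣ ξ a - ξ' a) (hne : ξ' ≠ ξ) :
    ∃ k, D.IsSource ξ k ∧ ξ' k < ξ k := by
  set S := Finset.univ.filter fun a => ξ' a < ξ a
  have hS : S.Nonempty := by
    obtain ⟨a, ha⟩ := Function.ne_iff.1 hne
    exact ⟨a, Finset.mem_filter.2 ⟨Finset.mem_univ a, lt_of_le_of_ne (hle a) ha⟩⟩
  -- a vertex where `ξ` is maximal among those where it exceeds `ξ'`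
  obtain ⟨k, hkS, hkmax⟩ := S.exists_max_image ξ hS
  have hk : ξ' k < ξ k := (Finset.mem_filter.1 hkS).2
  refine ⟨k, fun b hb => ?_, hk⟩
  have := hξ k b hb
  by_cases hbS : ξ' b < ξ b
  · have := hkmax b (Finset.mem_filter.2 ⟨Finset.mem_univ b, hbS⟩)
    omega
  · have := hle b
    have := hξ' k b hb
    have := hpar k
    omega

theorem eta_eq_of_le {ξ ξ' : D.I → ℤ} {τ τ' : D.V ≃ₗ[ℚ] D.V} (hξ : D.IsHeight ξ)
    (hξ' : D.IsHeight ξ') (hτ : D.IsCoxeterFor ξ τ) (hτ' : D.IsCoxeterFor ξ' τ')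
    (hle : ξ' ≤ ξ) (hpar : ∀ a, 2 ∣ ξ a - ξ' a) : D.eta ξ τ = D.eta ξ' τ' := by
  by_cases hne : ξ' = ξ
  · subst hne
    rw [hτ.unique hτ']
  obtain ⟨k, hk, hlt⟩ := exists_isSource_of_le hξ hξ' hle hpar hne
  rw [← eta_rHeight hτ hk]
  refine eta_eq_of_le (hξ.rHeight hk) hξ' (hτ.rHeight hk) hτ' (fun a => ?_) (fun a => ?_)
  all_goals
    have := hle a
    have := hpar a
    simp only [rHeight]
    split_ifs with hak
    · subst hak
      omega
    · omega
termination_by (∑ a, (ξ a - ξ' a)).toNat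
decreasing_by
  have hsum : ∑ a, (D.rHeight ξ k a - ξ' a) = ∑ a, (ξ a - ξ' a) - 2 := by
    simp only [Finset.sum_sub_distrib, sum_rHeight]
    ring
  have hpos : ξ k - ξ' k ≤ ∑ a, (ξ a - ξ' a) :=
    Finset.single_le_sum (fun a _ => sub_nonneg.2 (hle a)) (Finset.mem_univ k)
  omega

end SSDatum

/-- For any two Dynkin quivers `Q`, `Q'` on the same Dynkin diagram `Δ`
and any `i,j ∈ I`, the functions `η_{i,j}^Q` and `η_{i,j}^{Q'}` coincide. -/
theorem stmt10 (D : SSDatum) (ξ ξ' : D.I → ℤ) (hξ : D.IsHeight ξ) (hξ' : D.IsHeight ξ')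
    (τ τ' : D.V ≃ₗ[ℚ] D.V) (hτ : D.IsCoxeterFor ξ τ) (hτ' : D.IsCoxeterFor ξ' τ')
    (i j : D.I) (u : ℤ) :
    D.eta ξ τ i j u = D.eta ξ' τ' i j u := by
  obtain ⟨a₀, -, hmin⟩ := Finset.univ.exists_min_image (fun a => ξ a - ξ' a) Finset.univ_nonempty
  have hle : (fun a => ξ' a + (ξ a₀ - ξ' a₀)) ≤ ξ := fun a => by
    have := hmin a (Finset.mem_univ a)
    dsimp only
    omega
  have hpar : ∀ a, 2 ∣ ξ a - (ξ' a + (ξ a₀ - ξ' a₀)) := fun a => by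
    have := hξ.emod_two_sub_eq hξ' a a₀
    omega
  rw [SSDatum.eta_eq_of_le hξ (hξ'.shift _) hτ (hτ'.shift _) hle hpar, SSDatum.eta_shift]
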